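/- arXiv:0812.0215 — 2 statements merged into one kernel-verified Lean document; each statement's English description precedes it below -/
import Mathlib

section
/- Let Δ be a 2-dimensional Buchsbaum simplicial complex that is link-acyclic. Then any 2-dimensional Buchsbaum simplicial complex Γ with Γ ⊆ Δ is also link-acyclic. -/
open Finset

noncomputable section

/-- `Δ` is a simplicial complex on `[n] = {1,…,n}`: a collection of subsets of `[n]`,
closed under taking subsets, containing every singleton `{i}` for `i ∈ [n]`. -/
def IsComplexOn (n : ℕ) (Δ : Finset (Finset ℕ)) : Prop :=
  (∀ F ∈ Δ, ∀ G ⊆ F, G ∈ Δ) ∧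
  (∀ F ∈ Δ, ∀ i ∈ F, i ∈ Finset.Icc 1 n) ∧
  (∀ i ∈ Finset.Icc 1 n, ({i} : Finset ℕ) ∈ Δ)

/-- a simplicial complex whose vertex set is contained in `[n]`:
a downward closed collection of subsets of `[n]`. -/
def IsComplexIn (n : ℕ) (Δ : Finset (Finset ℕ)) : Prop :=
  (∀ F ∈ Δ, ∀ G ⊆ F, G ∈ Δ) ∧ (∀ F ∈ Δ, ∀ i ∈ F, i ∈ Finset.Icc 1 n)

/-- the faces of `Δ` with `m` vertices -/
def facesOf (Δ : Finset (Finset ℕ)) (m : ℕ) : Finset (Finset ℕ) :=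
  Δ.filter fun F => F.card = m

/-- `fVec Δ j = f_{j-1}(Δ)`, the number of faces of `Δ` with `j` vertices;
by convention `f_{-1}(Δ) = 1`. -/
def fVec (Δ : Finset (Finset ℕ)) (j : ℕ) : ℤ :=
  if j = 0 then 1 else ((facesOf Δ j).card : ℤ)

/-- the `h`-vector of a `(d-1)`-dimensional complex, defined by
`∑ f_{i-1} (x-1)^{d-i} = ∑ h_i x^{d-i}`, i.e.
`h_i = ∑_{j=0}^{i} (-1)^{i-j} C(d-j, i-j) f_{j-1}`. -/
def hVec (d : ℕ) (Δ : Finset (Finset ℕ)) (i : ℕ) : ℤ :=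
  ∑ j ∈ Finset.range (i + 1),
    (-1 : ℤ) ^ (i - j) * ((d - j).choose (i - j) : ℤ) * fVec Δ j

/-- the dimension `max {k : f_k(Δ) ≠ 0}` of `Δ`, as an integer -/
def dimZ (Δ : Finset (Finset ℕ)) : ℤ := ((Δ.sup Finset.card : ℕ) : ℤ) - 1

/-- the link `lk_Δ(F) = {G : G ∩ F = ∅, G ∪ F ∈ Δ}` -/
def link (Δ : Finset (Finset ℕ)) (F : Finset ℕ) : Finset (Finset ℕ) :=
  Δ.filter fun G => Disjoint G F ∧ G ∪ F ∈ Δ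

variable (K : Type) [Field K]

/-- the simplicial boundary operator on formal `K`-linear combinations of
finite subsets of `ℕ` (vertices ordered by the order on `ℕ`):
`∂ F = ∑_{v ∈ F} (-1)^{#{u ∈ F : u < v}} (F \ {v})`. -/
def bdry : (Finset ℕ →₀ K) →ₗ[K] (Finset ℕ →₀ K) :=
  Finsupp.lsum K fun F => LinearMap.toSpanSingleton K (Finset ℕ →₀ K)
    (∑ v ∈ F, ((-1 : K) ^ ((F.filter fun u => u < v).card)) • Finsupp.single (F.erase v) (1 : K))

/-- the space of simplicial `K`-chains of `Δ` spanned by the faces with `m` vertices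
(for `m = 0` this is the span of the empty face, giving *reduced* homology) -/
def chains (Δ : Finset (Finset ℕ)) (m : ℕ) : Submodule K (Finset ℕ →₀ K) :=
  Submodule.span K ((fun F => Finsupp.single F (1 : K)) '' (facesOf Δ m : Set (Finset ℕ)))

/-- the dimension of the reduced homology of `Δ` at faces of cardinality `m`:
`dim (ker ∂ ∩ C_m) - dim (∂ C_{m+1})` -/
def homDim (Δ : Finset (Finset ℕ)) (m : ℕ) : ℕ :=
  Module.finrank K ↥(chains K Δ m ⊓ LinearMap.ker (bdry K))
    - Module.finrank K ↥((chains K Δ (m + 1)).map (bdry K))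

/-- the reduced Betti number `β_i(Δ; K) = dim_K H̃_i(Δ; K)` for `i : ℤ` -/
def betti (Δ : Finset (Finset ℕ)) (i : ℤ) : ℕ :=
  if 0 ≤ i + 1 then homDim K Δ (i + 1).toNat else 0

/-- all facets (maximal faces) of `Δ` have the same cardinality -/
def IsPure (Δ : Finset (Finset ℕ)) : Prop :=
  ∀ F ∈ Δ, (∀ G ∈ Δ, F ⊆ G → F = G) → F.card = Δ.sup Finset.card

/-- `Δ` is Cohen–Macaulay (over `K`): for every face `F ∈ Δ` (including `∅`),
`β_i(lk_Δ(F)) = 0` for all `i ≠ dim Δ - |F|`. -/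
def IsCohenMacaulay (Δ : Finset (Finset ℕ)) : Prop :=
  ∀ F ∈ Δ, ∀ i : ℤ, i ≠ dimZ Δ - F.card → betti K (link Δ F) i = 0

/-- `Δ` is Buchsbaum (over `K`): `Δ` is pure and the link of every vertex is
Cohen–Macaulay. -/
def IsBuchsbaum (Δ : Finset (Finset ℕ)) : Prop :=
  IsPure Δ ∧ ∀ v : ℕ, ({v} : Finset ℕ) ∈ Δ → IsCohenMacaulay K (link Δ {v})

/-- `Δ` is connected: any two vertices are joined by a path of edges of `Δ` -/
def IsConnectedComplex (Δ : Finset (Finset ℕ)) : Prop :=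
  ∀ u v : ℕ, ({u} : Finset ℕ) ∈ Δ → ({v} : Finset ℕ) ∈ Δ →
    Relation.ReflTransGen (fun a b : ℕ => a ≠ b ∧ ({a, b} : Finset ℕ) ∈ Δ) u v

/-- `Δ` is link-acyclic: `β_i(lk_Δ(v)) = 0` for every vertex `v` of `Δ` and every `i` -/
def IsLinkAcyclic (Δ : Finset (Finset ℕ)) : Prop :=
  ∀ v : ℕ, ({v} : Finset ℕ) ∈ Δ → ∀ i : ℤ, betti K (link Δ {v}) i = 0

/-- `Δ` is `2`-dimensional with `h`-vector `(a, b, c, e)` -/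
def hVector3 (Δ : Finset (Finset ℕ)) (a b c e : ℤ) : Prop :=
  hVec 3 Δ 0 = a ∧ hVec 3 Δ 1 = b ∧ hVec 3 Δ 2 = c ∧ hVec 3 Δ 3 = e

/-- `macaulay2 a = a^⟨2⟩`: if `a = C(b,2) + r` is the (greedy) `2`-nd Macaulay
representation (`b` maximal with `C(b,2) ≤ a`, `0 ≤ r < b`, `r = C(r,1)`), then
`a^⟨2⟩ = C(b+1,3) + C(r+1,2)`, and `0^⟨2⟩ = 0`. -/
def macaulay2 (a : ℕ) : ℕ :=
  if a = 0 then 0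
  else
    (Nat.findGreatest (fun t => t.choose 2 ≤ a) (a + 2) + 1).choose 3
      + (a - (Nat.findGreatest (fun t => t.choose 2 ≤ a) (a + 2)).choose 2 + 1).choose 2

/-- `modRep n i = ī`, the unique element of `[n] = {1,…,n}` congruent to `i` mod `n` -/
def modRep (n : ℕ) (i : ℤ) : ℕ := ((i - 1) % (n : ℤ)).toNat + 1


end


section AuxStmt7
open Finset Module Submodule

lemma mem_link' {X : Finset (Finset ℕ)} {F G : Finset ℕ} :
    G ∈ link X F ↔ G ∈ X ∧ Disjoint G F ∧ G ∪ F ∈ X := by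
  simp [link, and_assoc]

lemma link_empty_eq (X : Finset (Finset ℕ)) : link X ∅ = X := by
  unfold link
  apply Finset.filter_true_of_mem
  intro G hG
  exact ⟨Finset.disjoint_empty_right G, by simpa using hG⟩

lemma chains_eq_bot (K : Type) [Field K] {X : Finset (Finset ℕ)} {m : ℕ}
    (h : facesOf X m = ∅) : chains K X m = ⊥ := by
  rw [chains, h]
  simp

instance chains_fd (K : Type) [Field K] (X : Finset (Finset ℕ)) (m : ℕ) :
    FiniteDimensional K (chains K X m) := by
  apply FiniteDimensional.span_of_finite
  exact Set.Finite.image _ (Finset.finite_toSet _)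

/-- key step: if β₁ of the big link is zero and the big link has no faces of
cardinality 3, then any subcomplex's cardinality-2 cycles vanish. -/
lemma hom1_sub_zero (K : Type) [Field K] {X Y : Finset (Finset ℕ)}
    (hXY : X ⊆ Y) (h3 : facesOf Y 3 = ∅) (hY : homDim K Y 2 = 0) :
    homDim K X 2 = 0 := by
  haveI : FiniteDimensional K ↥(chains K Y 2 ⊓ LinearMap.ker (bdry K)) :=
    Submodule.finiteDimensional_inf_left _ _
  have hker : chains K Y 2 ⊓ LinearMap.ker (bdry K) = ⊥ := by
    have hb : chains K Y 3 = ⊥ := chains_eq_bot K h3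
    rw [homDim, hb, Submodule.map_bot, finrank_bot, Nat.sub_zero] at hY
    exact Submodule.finrank_eq_zero.mp hY
  have hsub : chains K X 2 ≤ chains K Y 2 := by
    apply Submodule.span_mono
    apply Set.image_mono
    intro F hF
    simp only [facesOf, Finset.coe_filter, Set.mem_setOf_eq] at hF ⊢
    exact ⟨hXY hF.1, hF.2⟩
  have hN : chains K X 2 ⊓ LinearMap.ker (bdry K) = ⊥ := by
    rw [← le_bot_iff, ← hker]
    exact inf_le_inf_right _ hsub
  rw [homDim, hN, finrank_bot, Nat.zero_sub]

lemma link_card_le {X : Finset (Finset ℕ)} {v : ℕ} (hX : X.sup Finset.card = 3)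
    {G : Finset ℕ} (hG : G ∈ link X {v}) : G.card ≤ 2 := by
  rw [mem_link'] at hG
  have h1 : (G ∪ {v}).card ≤ 3 := by
    rw [← hX]; exact Finset.le_sup hG.2.2
  rw [Finset.card_union_of_disjoint hG.2.1, Finset.card_singleton] at h1
  omega

lemma facesOf_link_three {X : Finset (Finset ℕ)} {v : ℕ}
    (hX : X.sup Finset.card = 3) : facesOf (link X {v}) 3 = ∅ := by
  rw [Finset.eq_empty_iff_forall_notMem]
  intro G hG
  rw [facesOf, Finset.mem_filter] at hG
  have := link_card_le hX hG.1
  omega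

end AuxStmt7

/-- **Lemma 2.4(ii).** A `2`-dimensional Buchsbaum subcomplex of a link-acyclic
`2`-dimensional Buchsbaum complex is link-acyclic. -/
theorem stmt7 (K : Type) [Field K] (n m : ℕ) (Δ Γ : Finset (Finset ℕ))
    (hΔ : IsComplexOn n Δ) (hdΔ : dimZ Δ = 2) (hBΔ : IsBuchsbaum K Δ)
    (hla : IsLinkAcyclic K Δ)
    (hΓ : IsComplexOn m Γ) (hdΓ : dimZ Γ = 2) (hBΓ : IsBuchsbaum K Γ)
    (hsub : Γ ⊆ Δ) : IsLinkAcyclic K Γ := by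
  intro v hv i
  have hvΔ : ({v} : Finset ℕ) ∈ Δ := hsub hv
  have hsupΓ : Γ.sup Finset.card = 3 := by unfold dimZ at hdΓ; omega
  have hsupΔ : Δ.sup Finset.card = 3 := by unfold dimZ at hdΔ; omega
  -- there is a face of cardinality 2 in link Γ {v}
  obtain ⟨G, hG, hGmax⟩ := Finset.exists_max_image (Γ.filter fun F => v ∈ F)
    Finset.card ⟨{v}, by simp [hv]⟩
  rw [Finset.mem_filter] at hG
  have hGcard : G.card = 3 := by
    rw [← hsupΓ]
    apply hBΓ.1 G hG.1
    intro H hH hGH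
    refine Finset.eq_of_subset_of_card_le hGH ?_
    exact hGmax H (Finset.mem_filter.mpr ⟨hH, hGH hG.2⟩)
  have hface : G.erase v ∈ link Γ {v} := by
    rw [mem_link']
    refine ⟨hΓ.1 G hG.1 _ (Finset.erase_subset v G), ?_, ?_⟩
    · simp [Finset.disjoint_singleton_right]
    · have he : G.erase v ∪ {v} = G := by
        ext x
        by_cases hx : x = v <;> simp [hx, hG.2]
      rw [he]; exact hG.1
  have hfcard : (G.erase v).card = 2 := by
    rw [Finset.card_erase_of_mem hG.2, hGcard]
  -- dimension of link Γ {v} is 1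
  have hsuplink : (link Γ {v}).sup Finset.card = 2 := by
    apply le_antisymm
    · exact Finset.sup_le fun G hG => link_card_le hsupΓ hG
    · rw [← hfcard]; exact Finset.le_sup hface
  have hdlink : dimZ (link Γ {v}) = 1 := by unfold dimZ; rw [hsuplink]; norm_num
  by_cases hi : i = 1
  · -- top Betti number: subcomplex of a forest
    subst hi
    have hbΔ : betti K (link Δ {v}) 1 = 0 := hla v hvΔ 1
    rw [betti] at hbΔ ⊢
    norm_num at hbΔ ⊢
    have hlinksub : link Γ {v} ⊆ link Δ {v} := by
      intro F hF
      rw [mem_link'] at hF ⊢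
      exact ⟨hsub hF.1, hF.2.1, hsub hF.2.2⟩
    exact hom1_sub_zero K hlinksub (facesOf_link_three hsupΔ) hbΔ
  · -- other Betti numbers vanish since the link is Cohen–Macaulay
    have hCM := hBΓ.2 v hv
    have hemp : (∅ : Finset ℕ) ∈ link Γ {v} := by
      rw [mem_link']
      exact ⟨hΓ.1 _ hv _ (Finset.empty_subset _), Finset.disjoint_empty_left _,
        by simpa using hv⟩
    have := hCM ∅ hemp i (by rw [hdlink]; simpa using hi)
    rwa [link_empty_eq] at this
end

section
/- Let Δ be a 2-dimensional Buchsbaum simplicial complex and F = {a,b,c} a 3-element set, and set Γ = Δ ∪ ⟨F⟩. If Δ ∩ ⟨F⟩ = ⟨{a,b},{a,c}⟩, then Γ is Buchsbaum and h(Γ) = h(Δ) + (0,0,1,0). -/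
open Finset

/-!
Gluing the triangle `abc` to `Δ` along the edges `ab` and `ac` adds exactly the two faces `bc` and
`abc`, which accounts for the change of the `h`-vector. Links of vertices other than `a, b, c` do
not change. The links of `a, b, c` are Cohen–Macaulay graphs, i.e. connected graphs without
isolated vertices, to which one edge is attached at an old vertex; such a graph is again connected
without isolated vertices.
-/

open Module

theorem Finset.exists_lt_eq_pair {α : Type*} [LinearOrder α] {F : Finset α} (hF : F.card = 2) :
    ∃ u w, u < w ∧ F = {u, w} := by
  obtain ⟨u, w, huw, rfl⟩ := Finset.card_eq_two.1 hF
  rcases huw.lt_or_gt with h | h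
  · exact ⟨u, w, h, rfl⟩
  · exact ⟨w, u, h, Finset.pair_comm _ _⟩

theorem Finset.subset_pair_iff_eq {α : Type*} [DecidableEq α] {s : Finset α} {x y : α} :
    s ⊆ {x, y} ↔ s = ∅ ∨ s = {x} ∨ s = {y} ∨ s = {x, y} := by
  rw [← Finset.coe_subset, Finset.coe_pair, Set.subset_pair_iff_eq]
  simp only [Finset.coe_eq_empty, Finset.coe_eq_singleton, ← Finset.coe_pair, Finset.coe_inj]

section FaceNumbers
variable {Λ : Finset (Finset ℕ)} {F : Finset ℕ}

theorem fVec_insert (hF : F ∉ Λ) (hF0 : F ≠ ∅) (j : ℕ) :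
    fVec (insert F Λ) j = fVec Λ j + if j = F.card then 1 else 0 := by
  have hcard : F.card ≠ 0 := Finset.card_ne_zero.2 (Finset.nonempty_iff_ne_empty.2 hF0)
  unfold fVec facesOf
  by_cases hj : j = 0
  · simp [hj, Ne.symm hcard]
  rw [if_neg hj, if_neg hj, Finset.filter_insert]
  by_cases hjF : j = F.card
  · have : F ∉ Λ.filter (·.card = j) := fun h => hF (Finset.mem_of_mem_filter F h)
    rw [if_pos hjF.symm, if_pos hjF, Finset.card_insert_of_notMem this, Nat.cast_succ]
  · rw [if_neg (Ne.symm hjF), if_neg hjF, add_zero]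

theorem hVec_insert (hF : F ∉ Λ) (hF0 : F ≠ ∅) (d i : ℕ) :
    hVec d (insert F Λ) i = hVec d Λ i +
      if F.card ≤ i then (-1) ^ (i - F.card) * ((d - F.card).choose (i - F.card) : ℤ) else 0 := by
  simp only [hVec, fVec_insert hF hF0, mul_add, Finset.sum_add_distrib, mul_ite, mul_one, mul_zero,
    Finset.sum_ite_eq', Finset.mem_range, Nat.lt_succ_iff]

end FaceNumbers

section Homology

variable (K : Type) [Field K] {Λ Λ' : Finset (Finset ℕ)} {m : ℕ}

/-- Chains are indexed by the number of vertices: `cycles K Λ (i + 1)` and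
`boundaries K Λ (i + 1)` are the reduced `i`-cycles and `i`-boundaries. -/
noncomputable def cycles (Λ : Finset (Finset ℕ)) (m : ℕ) : Submodule K (Finset ℕ →₀ K) :=
  chains K Λ m ⊓ LinearMap.ker (bdry K)

noncomputable def boundaries (Λ : Finset (Finset ℕ)) (m : ℕ) : Submodule K (Finset ℕ →₀ K) :=
  (chains K Λ (m + 1)).map (bdry K)

theorem homDim_eq_finrank_sub (Λ : Finset (Finset ℕ)) (m : ℕ) :
    homDim K Λ m = finrank K (cycles K Λ m) - finrank K (boundaries K Λ m) := rfl

theorem chains_eq_supported (Λ : Finset (Finset ℕ)) (m : ℕ) :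
    chains K Λ m = Finsupp.supported K K ↑(facesOf Λ m) := by
  rw [chains, Finsupp.supported_eq_span_single]

theorem single_mem_chains {G : Finset ℕ} (hG : G ∈ Λ) (hm : G.card = m) :
    Finsupp.single G (1 : K) ∈ chains K Λ m :=
  Submodule.subset_span ⟨G, Finset.mem_filter.2 ⟨hG, hm⟩, rfl⟩

instance (Λ : Finset (Finset ℕ)) (m : ℕ) : FiniteDimensional K (chains K Λ m) :=
  FiniteDimensional.span_of_finite K ((facesOf Λ m).finite_toSet.image _)

instance (Λ : Finset (Finset ℕ)) (m : ℕ) : FiniteDimensional K (cycles K Λ m) :=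
  Submodule.finiteDimensional_of_le inf_le_left

instance (Λ : Finset (Finset ℕ)) (m : ℕ) : FiniteDimensional K (boundaries K Λ m) :=
  Module.Finite.map _ _

theorem bdry_single (F : Finset ℕ) :
    bdry K (Finsupp.single F 1) =
      ∑ v ∈ F, (-1 : K) ^ (F.filter fun u => u < v).card • Finsupp.single (F.erase v) 1 := by
  rw [bdry, Finsupp.lsum_single, LinearMap.toSpanSingleton_apply, one_smul]

theorem bdry_single_empty : bdry K (Finsupp.single ∅ 1) = 0 := by
  simp [bdry_single]

theorem bdry_single_singleton (v : ℕ) : bdry K (Finsupp.single {v} 1) = Finsupp.single ∅ 1 := by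
  simp [bdry_single, Finset.filter_singleton]

theorem bdry_single_pair {u w : ℕ} (h : u < w) :
    bdry K (Finsupp.single {u, w} 1) = Finsupp.single {w} 1 - Finsupp.single {u} 1 := by
  rw [bdry_single, Finset.sum_pair h.ne]
  simp [Finset.filter_insert, Finset.filter_singleton, h, h.ne, not_lt.2 h.le,
    Finset.erase_insert_of_ne, sub_eq_add_neg, add_comm]

theorem homDim_eq_zero_of_facesOf_eq_empty (h : facesOf Λ m = ∅) : homDim K Λ m = 0 := by
  have : chains K Λ m = ⊥ := by simp [chains, h]
  rw [homDim_eq_finrank_sub, cycles, this, bot_inf_eq, finrank_bot, Nat.zero_sub]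

theorem cycles_zero_eq_span (h0 : ∅ ∈ Λ) : cycles K Λ 0 = K ∙ Finsupp.single ∅ 1 := by
  have hchains : chains K Λ 0 = K ∙ Finsupp.single ∅ 1 := by
    have : facesOf Λ 0 = {∅} := by
      ext G
      simp only [facesOf, Finset.mem_filter, Finset.card_eq_zero, Finset.mem_singleton]
      exact ⟨And.right, fun h => ⟨h ▸ h0, h⟩⟩
    simp [chains, this]
  refine le_antisymm (hchains ▸ inf_le_left) ?_
  rw [Submodule.span_singleton_le_iff_mem]
  exact ⟨single_mem_chains K h0 rfl, bdry_single_empty K⟩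

theorem homDim_zero_eq_zero_iff (h0 : ∅ ∈ Λ) : homDim K Λ 0 = 0 ↔ ∃ v, {v} ∈ Λ := by
  have hne : Finsupp.single (∅ : Finset ℕ) (1 : K) ≠ 0 := Finsupp.single_ne_zero.2 one_ne_zero
  rw [homDim_eq_finrank_sub, cycles_zero_eq_span K h0, finrank_span_singleton hne]
  constructor
  · intro h
    by_contra! hv
    have : facesOf Λ 1 = ∅ := by
      refine Finset.filter_eq_empty_iff.2 fun G hG hG1 => ?_
      obtain ⟨v, rfl⟩ := Finset.card_eq_one.1 hG1
      exact hv v hG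
    have hb : boundaries K Λ 0 = ⊥ := by simp [boundaries, chains, this]
    rw [hb, finrank_bot] at h
    exact one_ne_zero h
  · rintro ⟨v, hv⟩
    have : K ∙ Finsupp.single ∅ 1 ≤ boundaries K Λ 0 := by
      rw [Submodule.span_singleton_le_iff_mem]
      exact ⟨_, single_mem_chains K hv (Finset.card_singleton v), bdry_single_singleton K v⟩
    have := Submodule.finrank_mono this
    rw [finrank_span_singleton hne] at this
    omega

theorem boundaries_mono (h : Λ ⊆ Λ') : boundaries K Λ m ≤ boundaries K Λ' m :=
  Submodule.map_mono <| Submodule.span_mono <| Set.image_mono <| Finset.coe_subset.2 <|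
    Finset.filter_subset_filter _ h

theorem boundaries_one_le_cycles_one (hΛ : IsLowerSet (Λ : Set (Finset ℕ))) :
    boundaries K Λ 1 ≤ cycles K Λ 1 := by
  rw [boundaries, chains, Submodule.map_span, Submodule.span_le]
  rintro _ ⟨_, ⟨F, hF, rfl⟩, rfl⟩
  obtain ⟨hFΛ, hF2⟩ := Finset.mem_filter.1 hF
  obtain ⟨u, w, huw, rfl⟩ := Finset.exists_lt_eq_pair hF2
  have hvertex : ∀ x ∈ ({u, w} : Finset ℕ), Finsupp.single {x} (1 : K) ∈ chains K Λ 1 :=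
    fun x hx => single_mem_chains K (hΛ (Finset.singleton_subset_iff.2 hx) hFΛ) rfl
  refine ⟨?_, ?_⟩ <;> rw [SetLike.mem_coe, bdry_single_pair K huw]
  · exact sub_mem (hvertex w (by simp)) (hvertex u (by simp))
  · rw [LinearMap.mem_ker, map_sub, bdry_single_singleton, bdry_single_singleton, sub_self]

theorem homDim_one_eq_zero_iff (hΛ : IsLowerSet (Λ : Set (Finset ℕ))) :
    homDim K Λ 1 = 0 ↔ cycles K Λ 1 ≤ boundaries K Λ 1 := by
  rw [homDim_eq_finrank_sub, Nat.sub_eq_zero_iff_le]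
  refine ⟨fun h => ?_, Submodule.finrank_mono⟩
  exact (Submodule.eq_of_le_of_finrank_le (boundaries_one_le_cycles_one K hΛ) h).ge

theorem single_sub_single_mem_boundaries {u w : ℕ} (hE : ({u, w} : Finset ℕ) ∈ Λ) (huw : u ≠ w) :
    Finsupp.single {w} 1 - Finsupp.single {u} 1 ∈ boundaries K Λ 1 := by
  rcases huw.lt_or_gt with h | h
  · exact ⟨_, single_mem_chains K hE (Finset.card_pair huw), bdry_single_pair K h⟩
  · refine ⟨-Finsupp.single {w, u} 1, neg_mem ?_, ?_⟩
    · exact single_mem_chains K (Finset.pair_comm u w ▸ hE) (Finset.card_pair huw.symm)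
    · rw [map_neg, bdry_single_pair K h, neg_sub]

/-- Subtracting a multiple of `∂{p, q}` turns a `0`-cycle of the enlarged complex into one of
`Λ`. -/
theorem cycles_one_le_boundaries_one_insert_edge {p q : ℕ}
    (hZ : cycles K Λ 1 ≤ boundaries K Λ 1) (hp : {p} ∈ Λ) (hpq : p ≠ q) :
    cycles K (insert {p, q} (insert {q} Λ)) 1 ≤ boundaries K (insert {p, q} (insert {q} Λ)) 1 := by
  set Λ' := insert {p, q} (insert {q} Λ)
  have hsub : Λ ⊆ Λ' := (Finset.subset_insert _ _).trans (Finset.subset_insert _ _)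
  rintro x ⟨hx, hxker⟩
  set t := x {q}
  set y := x.erase {q} + t • Finsupp.single {p} 1
  have hxy : x = y + t • (Finsupp.single {q} 1 - Finsupp.single {p} 1) := by
    rw [smul_sub, add_add_sub_cancel, Finsupp.smul_single_one, Finsupp.erase_add_single]
  have hy_chains : y ∈ chains K Λ 1 := by
    rw [chains_eq_supported] at hx ⊢
    refine add_mem (fun G hG => ?_) (Submodule.smul_mem _ _ (Finsupp.single_mem_supported K _ ?_))
    · rw [Finset.mem_coe, Finsupp.support_erase, Finset.mem_erase] at hG
      obtain ⟨hGq, hGx⟩ := hG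
      obtain ⟨hGΛ', hG1⟩ := Finset.mem_filter.1 (hx hGx)
      refine Finset.mem_filter.2 ⟨?_, hG1⟩
      rcases Finset.mem_insert.1 hGΛ' with rfl | hG
      · simp [Finset.card_pair hpq] at hG1
      · exact (Finset.mem_insert.1 hG).resolve_left hGq
    · exact Finset.mem_filter.2 ⟨hp, rfl⟩
  have hy_ker : bdry K y = 0 := by
    rw [eq_sub_of_add_eq hxy.symm, map_sub, map_smul, map_sub, bdry_single_singleton,
      bdry_single_singleton, sub_self, smul_zero, sub_zero]
    exact hxker
  have hd := single_sub_single_mem_boundaries K (Λ := Λ') (Finset.mem_insert_self _ _) hpq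
  rw [hxy]
  exact add_mem (boundaries_mono K hsub (hZ ⟨hy_chains, hy_ker⟩)) (Submodule.smul_mem _ t hd)

end Homology

section Links
variable {Λ : Finset (Finset ℕ)} {F G : Finset ℕ} {v : ℕ}

theorem mem_link_singleton : G ∈ link Λ {v} ↔ G ∈ Λ ∧ v ∉ G ∧ insert v G ∈ Λ := by
  rw [link, Finset.mem_filter, Finset.disjoint_singleton_right, Finset.union_singleton]

theorem link_empty (Λ : Finset (Finset ℕ)) : link Λ ∅ = Λ :=
  Finset.filter_true_of_mem fun G hG => by simpa using hG

theorem isLowerSet_link (hΛ : IsLowerSet (Λ : Set (Finset ℕ))) (F : Finset ℕ) :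
    IsLowerSet (link Λ F : Set (Finset ℕ)) := by
  intro G H hHG hG
  obtain ⟨hGΛ, hGF, hGFΛ⟩ := Finset.mem_filter.1 hG
  exact Finset.mem_filter.2 ⟨hΛ hHG hGΛ, hGF.mono_left hHG,
    hΛ (Finset.union_subset_union_left hHG) hGFΛ⟩

theorem card_add_card_le_of_mem_link (hG : G ∈ link Λ F) : G.card + F.card ≤ Λ.sup Finset.card := by
  obtain ⟨-, hGF, hGFΛ⟩ := Finset.mem_filter.1 hG
  rw [← Finset.card_union_of_disjoint hGF]
  exact Finset.le_sup hGFΛ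

theorem link_insert_singleton_of_notMem (hΛ : IsLowerSet (Λ : Set (Finset ℕ))) (hv : v ∉ F) :
    link (insert F Λ) {v} = link Λ {v} := by
  ext G
  simp only [mem_link_singleton, Finset.mem_insert]
  constructor
  · rintro ⟨-, hvG, rfl | hG⟩
    · exact absurd (Finset.mem_insert_self v G) hv
    · exact ⟨hΛ (Finset.subset_insert v G) hG, hvG, hG⟩
  · rintro ⟨hG, hvG, hGv⟩
    exact ⟨Or.inr hG, hvG, Or.inr hGv⟩

theorem link_insert_singleton_of_mem (hv : v ∈ F) (hF : F.erase v ∈ Λ) :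
    link (insert F Λ) {v} = insert (F.erase v) (link Λ {v}) := by
  ext G
  simp only [mem_link_singleton, Finset.mem_insert]
  constructor
  · rintro ⟨hG, hvG, hGv | hGv⟩
    · left
      rw [← hGv, Finset.erase_insert hvG]
    · refine Or.inr ⟨hG.resolve_left ?_, hvG, hGv⟩
      rintro rfl
      exact hvG hv
  · rintro (rfl | ⟨hG, hvG, hGv⟩)
    · exact ⟨Or.inr hF, Finset.notMem_erase v F, Or.inl (Finset.insert_erase hv)⟩
    · exact ⟨Or.inr hG, hvG, Or.inr hGv⟩

theorem isPure_iff_forall_exists_superset :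
    IsPure Λ ↔ ∀ F ∈ Λ, ∃ G ∈ Λ, F ⊆ G ∧ G.card = Λ.sup Finset.card := by
  constructor
  · intro hpure F hF
    obtain ⟨G, hG, hmax⟩ :=
      (Λ.filter (F ⊆ ·)).exists_max_image Finset.card ⟨F, Finset.mem_filter.2 ⟨hF, subset_rfl⟩⟩
    obtain ⟨hGΛ, hFG⟩ := Finset.mem_filter.1 hG
    refine ⟨G, hGΛ, hFG, hpure G hGΛ fun H hH hGH => ?_⟩
    exact Finset.eq_of_subset_of_card_le hGH (hmax H (Finset.mem_filter.2 ⟨hH, hFG.trans hGH⟩))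
  · intro h F hF hmax
    obtain ⟨G, hG, hFG, hcard⟩ := h F hF
    rwa [hmax G hG hFG]

theorem IsPure.sup_card_link_singleton (hΛ : IsLowerSet (Λ : Set (Finset ℕ))) (hpure : IsPure Λ)
    (hv : {v} ∈ Λ) : (link Λ {v}).sup Finset.card + 1 = Λ.sup Finset.card := by
  refine le_antisymm ?_ ?_
  · have hempty : ∅ ∈ link Λ {v} :=
      mem_link_singleton.2 ⟨hΛ (Finset.empty_subset _) hv, Finset.notMem_empty v, hv⟩
    obtain ⟨G, hG, hsup⟩ := (link Λ {v}).exists_mem_eq_sup ⟨∅, hempty⟩ Finset.card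
    rw [hsup]
    exact card_add_card_le_of_mem_link hG
  · obtain ⟨G, hG, hvG, hcard⟩ := isPure_iff_forall_exists_superset.1 hpure _ hv
    have hvG : v ∈ G := Finset.singleton_subset_iff.1 hvG
    have : G.erase v ∈ link Λ {v} := mem_link_singleton.2
      ⟨hΛ (Finset.erase_subset v G) hG, Finset.notMem_erase v G, by rwa [Finset.insert_erase hvG]⟩
    calc Λ.sup Finset.card = (G.erase v).card + 1 := by rw [Finset.card_erase_add_one hvG, hcard]
      _ ≤ _ := Nat.add_le_add_right (Finset.le_sup this) 1

theorem IsPure.insert_insert_of_subset {E : Finset ℕ} (hpure : IsPure Λ)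
    (hF : F.card = Λ.sup Finset.card) (hEF : E ⊆ F) : IsPure (insert F (insert E Λ)) := by
  have hsup : (insert F (insert E Λ)).sup Finset.card = Λ.sup Finset.card := by
    rw [Finset.sup_insert, Finset.sup_insert, ← hF]
    simp [Finset.card_le_card hEF]
  rw [isPure_iff_forall_exists_superset, hsup]
  intro G hG
  rcases Finset.mem_insert.1 hG with rfl | hG
  · exact ⟨G, Finset.mem_insert_self _ _, subset_rfl, hF⟩
  rcases Finset.mem_insert.1 hG with rfl | hG
  · exact ⟨F, Finset.mem_insert_self _ _, hEF, hF⟩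
  obtain ⟨H, hH, hGH, hH3⟩ := isPure_iff_forall_exists_superset.1 hpure G hG
  exact ⟨H, Finset.mem_insert_of_mem (Finset.mem_insert_of_mem hH), hGH, hH3⟩

end Links

section CohenMacaulay
variable (K : Type) [Field K] {Λ : Finset (Finset ℕ)}

theorem betti_of_lt_neg_one {i : ℤ} (hi : i + 1 < 0) : betti K Λ i = 0 :=
  if_neg (not_le.2 hi)

theorem betti_natCast_sub_one (m : ℕ) : betti K Λ (m - 1) = homDim K Λ m := by
  rw [betti, if_pos (by omega), sub_add_cancel, Int.toNat_natCast]

theorem homDim_link_singleton_zero_eq_zero_iff (hΛ : IsLowerSet (Λ : Set (Finset ℕ))) {u : ℕ}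
    (hu : {u} ∈ Λ) : homDim K (link Λ {u}) 0 = 0 ↔ ∃ w ≠ u, {u, w} ∈ Λ := by
  have hempty : ∅ ∈ link Λ {u} :=
    mem_link_singleton.2 ⟨hΛ (Finset.empty_subset _) hu, Finset.notMem_empty u, hu⟩
  simp only [homDim_zero_eq_zero_iff K hempty, mem_link_singleton, Finset.mem_singleton]
  constructor
  · rintro ⟨w, -, hwu, hE⟩
    exact ⟨w, Ne.symm hwu, hE⟩
  · rintro ⟨w, hwu, hE⟩
    exact ⟨w, hΛ (by simp) hE, Ne.symm hwu, hE⟩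

/-- The second condition says that `Λ` is connected: a graph is Cohen–Macaulay iff it is
connected and has no isolated vertices. -/
theorem isCohenMacaulay_iff_of_sup_card_eq_two (hΛ : IsLowerSet (Λ : Set (Finset ℕ)))
    (h2 : Λ.sup Finset.card = 2) :
    IsCohenMacaulay K Λ ↔
      (∀ u, {u} ∈ Λ → ∃ w ≠ u, {u, w} ∈ Λ) ∧ cycles K Λ 1 ≤ boundaries K Λ 1 := by
  have hdim : dimZ Λ = 1 := by simp [dimZ, h2]
  obtain ⟨E, hE, hE2⟩ := Λ.exists_mem_eq_sup
    (Finset.nonempty_iff_ne_empty.2 (by rintro rfl; simp at h2)) Finset.card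
  obtain ⟨u, w, -, rfl⟩ := Finset.exists_lt_eq_pair (hE2.symm.trans h2)
  have h0 : ∅ ∈ Λ := hΛ (Finset.empty_subset _) hE
  constructor
  · intro hCM
    refine ⟨fun u hu => ?_, ?_⟩
    · have := hCM {u} hu ((0 : ℕ) - 1) (by simp [hdim])
      rwa [betti_natCast_sub_one, homDim_link_singleton_zero_eq_zero_iff K hΛ hu] at this
    · have := hCM ∅ h0 ((1 : ℕ) - 1) (by simp [hdim])
      rwa [betti_natCast_sub_one, link_empty, homDim_one_eq_zero_iff K hΛ] at this
  · rintro ⟨hedge, hconn⟩ F hF i hi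
    rcases lt_or_ge (i + 1) 0 with hi' | hi'
    · exact betti_of_lt_neg_one K hi'
    obtain ⟨m, rfl⟩ : ∃ m : ℕ, i = m - 1 := ⟨(i + 1).toNat, by omega⟩
    rw [betti_natCast_sub_one]
    rw [hdim] at hi
    by_cases hbig : 2 < m + F.card
    · refine homDim_eq_zero_of_facesOf_eq_empty K (Finset.filter_eq_empty_iff.2 fun G hG hGm => ?_)
      have := card_add_card_le_of_mem_link hG
      omega
    obtain ⟨rfl, hm⟩ | ⟨v, rfl, rfl⟩ : (F = ∅ ∧ m ≤ 1) ∨ ∃ v, F = {v} ∧ m = 0 := by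
      rcases Nat.lt_or_ge F.card 1 with h | h
      · exact Or.inl ⟨Finset.card_eq_zero.1 (by omega), by omega⟩
      · obtain ⟨v, rfl⟩ := Finset.card_eq_one.1 (show F.card = 1 by omega)
        exact Or.inr ⟨v, rfl, by rw [Finset.card_singleton] at hi hbig; omega⟩
    · rw [link_empty]
      interval_cases m
      · exact (homDim_zero_eq_zero_iff K h0).2 ⟨u, hΛ (by simp) hE⟩
      · exact (homDim_one_eq_zero_iff K hΛ).2 hconn
    · exact (homDim_link_singleton_zero_eq_zero_iff K hΛ hF).2 (hedge v hF)

theorem IsLowerSet.insert_edge (hΛ : IsLowerSet (Λ : Set (Finset ℕ))) {p q : ℕ} (hp : {p} ∈ Λ) :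
    IsLowerSet ((insert {p, q} (insert {q} Λ) : Finset (Finset ℕ)) : Set (Finset ℕ)) := by
  have h0 : ∅ ∈ Λ := hΛ (Finset.empty_subset _) hp
  intro G H hHG hG
  simp only [Finset.coe_insert, Set.mem_insert_iff, Finset.mem_coe] at hG ⊢
  rcases hG with rfl | rfl | hG
  · rcases Finset.subset_pair_iff_eq.1 hHG with rfl | rfl | rfl | rfl <;> simp [h0, hp]
  · rcases Finset.subset_singleton_iff.1 hHG with rfl | rfl <;> simp [h0]
  · exact Or.inr (Or.inr (hΛ hHG hG))

theorem IsCohenMacaulay.insert_edge (hΛ : IsLowerSet (Λ : Set (Finset ℕ)))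
    (h2 : Λ.sup Finset.card = 2) (hCM : IsCohenMacaulay K Λ) {p q : ℕ} (hp : {p} ∈ Λ)
    (hpq : p ≠ q) : IsCohenMacaulay K (insert {p, q} (insert {q} Λ)) := by
  have h2' : (insert {p, q} (insert {q} Λ)).sup Finset.card = 2 := by
    simp [Finset.sup_insert, h2, Finset.card_pair hpq]
  obtain ⟨hedge, hconn⟩ := (isCohenMacaulay_iff_of_sup_card_eq_two K hΛ h2).1 hCM
  refine (isCohenMacaulay_iff_of_sup_card_eq_two K (hΛ.insert_edge hp) h2').2
    ⟨fun u hu => ?_, cycles_one_le_boundaries_one_insert_edge K hconn hp hpq⟩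
  rcases Finset.mem_insert.1 hu with hu | hu
  · simpa [hpq] using congrArg Finset.card hu
  rcases Finset.mem_insert.1 hu with hu | hu
  · obtain rfl := Finset.singleton_injective hu
    exact ⟨p, hpq, by simp [Finset.pair_comm]⟩
  · obtain ⟨w, hwu, hE⟩ := hedge u hu
    exact ⟨w, hwu, Finset.mem_insert_of_mem (Finset.mem_insert_of_mem hE)⟩

end CohenMacaulay

section Gluing
variable (K : Type) [Field K] {Δ : Finset (Finset ℕ)} {a b c : ℕ}

theorem IsBuchsbaum.isCohenMacaulay_insert_edge_link (hΔ : IsLowerSet (Δ : Set (Finset ℕ)))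
    (hB : IsBuchsbaum K Δ) (h3 : Δ.sup Finset.card = 3) {v p q : ℕ} (hvp : {v, p} ∈ Δ)
    (hne : v ≠ p) (hpq : p ≠ q) : IsCohenMacaulay K (insert {p, q} (insert {q} (link Δ {v}))) := by
  have hv : {v} ∈ Δ := hΔ (by simp) hvp
  have hp : {p} ∈ link Δ {v} := mem_link_singleton.2 ⟨hΔ (by simp) hvp, by simpa using hne, hvp⟩
  have h2 : (link Δ {v}).sup Finset.card = 2 := by
    have := hB.1.sup_card_link_singleton hΔ hv
    omega
  exact (hB.2 v hv).insert_edge K (isLowerSet_link hΔ _) h2 hp hpq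

theorem IsBuchsbaum.isCohenMacaulay_link_insert_triangle (hΔ : IsLowerSet (Δ : Set (Finset ℕ)))
    (hB : IsBuchsbaum K Δ) (h3 : Δ.sup Finset.card = 3) (hab : a ≠ b) (hac : a ≠ c) (hbc : b ≠ c)
    (habΔ : {a, b} ∈ Δ) (hacΔ : {a, c} ∈ Δ) {v : ℕ} (hv : {v} ∈ Δ) :
    IsCohenMacaulay K (link (insert {a, b, c} (insert {b, c} Δ)) {v}) := by
  have hbΔ : {b} ∈ Δ := hΔ (by simp) habΔ
  have hcΔ : {c} ∈ Δ := hΔ (by simp) hacΔ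
  by_cases hva : v = a
  · subst hva
    have e : ({v, b, c} : Finset ℕ).erase v = {b, c} := by simp [hab, hac]
    have hc : {c} ∈ link Δ {v} := mem_link_singleton.2 ⟨hcΔ, by simpa using hac, hacΔ⟩
    rw [link_insert_singleton_of_mem (by simp) (by rw [e]; exact Finset.mem_insert_self _ _), e,
      link_insert_singleton_of_notMem hΔ (by simp [hab, hac]), ← Finset.insert_eq_of_mem hc]
    exact hB.isCohenMacaulay_insert_edge_link K hΔ h3 habΔ hab hbc
  by_cases hvb : v = b
  · subst hvb
    have e : ({a, v, c} : Finset ℕ).erase v = {a, c} := by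
      simp [Finset.erase_insert_of_ne, hab, hbc]
    have e' : ({v, c} : Finset ℕ).erase v = {c} := by simp [hbc]
    rw [link_insert_singleton_of_mem (by simp) (by rw [e]; exact Finset.mem_insert_of_mem hacΔ), e,
      link_insert_singleton_of_mem (by simp) (by rwa [e']), e']
    exact hB.isCohenMacaulay_insert_edge_link K hΔ h3 (Finset.pair_comm a v ▸ habΔ) hab.symm hac
  by_cases hvc : v = c
  · subst hvc
    have e : ({a, b, v} : Finset ℕ).erase v = {a, b} := by
      simp [Finset.erase_insert_of_ne, hac, hbc]
    have e' : ({b, v} : Finset ℕ).erase v = {b} := by simp [Finset.erase_insert_of_ne, hbc]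
    rw [link_insert_singleton_of_mem (by simp) (by rw [e]; exact Finset.mem_insert_of_mem habΔ), e,
      link_insert_singleton_of_mem (by simp) (by rwa [e']), e']
    exact hB.isCohenMacaulay_insert_edge_link K hΔ h3 (Finset.pair_comm a v ▸ hacΔ) hac.symm hab
  have hΔ' : IsLowerSet ((insert {b, c} Δ : Finset (Finset ℕ)) : Set (Finset ℕ)) := by
    simpa [Finset.insert_eq_of_mem hcΔ] using hΔ.insert_edge (q := c) hbΔ
  rw [link_insert_singleton_of_notMem hΔ' (by simp [hva, hvb, hvc]),
    link_insert_singleton_of_notMem hΔ (by simp [hvb, hvc])]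
  exact hB.2 v hv

theorem IsBuchsbaum.insert_triangle (hΔ : IsLowerSet (Δ : Set (Finset ℕ)))
    (hB : IsBuchsbaum K Δ) (h3 : Δ.sup Finset.card = 3) (hab : a ≠ b) (hac : a ≠ c) (hbc : b ≠ c)
    (habΔ : {a, b} ∈ Δ) (hacΔ : {a, c} ∈ Δ) :
    IsBuchsbaum K (insert {a, b, c} (insert {b, c} Δ)) := by
  have hcard : ({a, b, c} : Finset ℕ).card = Δ.sup Finset.card := by
    rw [h3, Finset.card_eq_three]; exact ⟨a, b, c, hab, hac, hbc, rfl⟩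
  refine ⟨hB.1.insert_insert_of_subset hcard (Finset.subset_insert _ _), fun v hv => ?_⟩
  have hvΔ : {v} ∈ Δ := by
    rcases Finset.mem_insert.1 hv with h | h
    · simpa [hab, hac, hbc] using congrArg Finset.card h
    · refine (Finset.mem_insert.1 h).resolve_left fun h => ?_
      simpa [hbc] using congrArg Finset.card h
  exact hB.isCohenMacaulay_link_insert_triangle K hΔ h3 hab hac hbc habΔ hacΔ hvΔ

theorem union_powerset_eq_insert_insert
    (hcap : Δ ∩ ({a, b, c} : Finset ℕ).powerset =
      ({a, b} : Finset ℕ).powerset ∪ ({a, c} : Finset ℕ).powerset) :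
    Δ ∪ ({a, b, c} : Finset ℕ).powerset = insert {a, b, c} (insert {b, c} Δ) := by
  ext X
  simp only [Finset.mem_union, Finset.mem_insert, Finset.mem_powerset]
  constructor
  · rintro (hX | hX)
    · exact Or.inr (Or.inr hX)
    by_cases hXΔ : X ∈ Δ
    · exact Or.inr (Or.inr hXΔ)
    have hXcap : X ∉ Δ ∩ ({a, b, c} : Finset ℕ).powerset :=
      fun h => hXΔ (Finset.mem_of_mem_inter_left h)
    simp only [hcap, Finset.mem_union, Finset.mem_powerset, not_or] at hXcap
    simp only [Finset.subset_iff, Finset.mem_insert, Finset.mem_singleton, Finset.ext_iff]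
      at hX hXcap ⊢
    grind
  · rintro (rfl | rfl | hX)
    · exact Or.inr subset_rfl
    · exact Or.inr (Finset.subset_insert _ _)
    · exact Or.inl hX

theorem mem_of_subset_pair
    (hcap : Δ ∩ ({a, b, c} : Finset ℕ).powerset =
      ({a, b} : Finset ℕ).powerset ∪ ({a, c} : Finset ℕ).powerset)
    {X : Finset ℕ} (hX : X ⊆ {a, b} ∨ X ⊆ {a, c}) : X ∈ Δ := by
  have : X ∈ Δ ∩ ({a, b, c} : Finset ℕ).powerset := by
    rw [hcap, Finset.mem_union, Finset.mem_powerset, Finset.mem_powerset]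
    exact hX
  exact Finset.mem_of_mem_inter_left this

theorem pair_notMem (hab : a ≠ b) (hac : a ≠ c) (hbc : b ≠ c)
    (hcap : Δ ∩ ({a, b, c} : Finset ℕ).powerset =
      ({a, b} : Finset ℕ).powerset ∪ ({a, c} : Finset ℕ).powerset) :
    {b, c} ∉ Δ := by
  intro h
  have : {b, c} ∈ Δ ∩ ({a, b, c} : Finset ℕ).powerset :=
    Finset.mem_inter.2 ⟨h, Finset.mem_powerset.2 (Finset.subset_insert _ _)⟩
  rw [hcap] at this
  simp [Finset.subset_iff, hbc, hab.symm, hac.symm, hbc.symm] at this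

end Gluing

/-- **Lemma 2.5.** Let `Δ` be a `2`-dimensional Buchsbaum complex, `F = {a,b,c}`,
and `Γ = Δ ∪ ⟨F⟩`. If `Δ ∩ ⟨F⟩ = ({a, b} : Finset ℕ).powerset ∪ ({a, c} : Finset ℕ).powerset` then `Γ` is Buchsbaum
and the `h`-vector changes as stated. -/
theorem stmt9 (K : Type) [Field K] (nn : ℕ) (Δ Γ : Finset (Finset ℕ)) (a b c : ℕ)
    (hΔ : IsComplexOn nn Δ) (hdim : dimZ Δ = 2) (hB : IsBuchsbaum K Δ)
    (hab : a ≠ b) (hac : a ≠ c) (hbc : b ≠ c)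
    (hΓ : Γ = Δ ∪ ({a, b, c} : Finset ℕ).powerset)
    (hcap : Δ ∩ ({a, b, c} : Finset ℕ).powerset =
      ({a, b} : Finset ℕ).powerset ∪ ({a, c} : Finset ℕ).powerset) :
    IsBuchsbaum K Γ ∧ hVec 3 Γ 0 = hVec 3 Δ 0 ∧
      hVec 3 Γ 1 = hVec 3 Δ 1 ∧
      hVec 3 Γ 2 = hVec 3 Δ 2 + 1 ∧
      hVec 3 Γ 3 = hVec 3 Δ 3 := by
  have hΔ' : IsLowerSet (Δ : Set (Finset ℕ)) := fun _ _ hGF hF => hΔ.1 _ hF _ hGF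
  have h3 : Δ.sup Finset.card = 3 := by rw [dimZ] at hdim; omega
  have hbcΔ : {b, c} ∉ Δ := pair_notMem hab hac hbc hcap
  have habc : {a, b, c} ∉ insert {b, c} Δ := by
    rw [Finset.mem_insert, not_or]
    refine ⟨fun h => ?_, fun h => hbcΔ (hΔ' (Finset.subset_insert _ _) h)⟩
    simpa [hab, hac] using congrArg (a ∈ ·) h
  have hcard : ({a, b, c} : Finset ℕ).card = 3 :=
    Finset.card_eq_three.2 ⟨a, b, c, hab, hac, hbc, rfl⟩
  rw [hΓ, union_powerset_eq_insert_insert hcap]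
  refine ⟨hB.insert_triangle K hΔ' h3 hab hac hbc (mem_of_subset_pair hcap (Or.inl subset_rfl))
    (mem_of_subset_pair hcap (Or.inr subset_rfl)), ?_⟩
  simp only [hVec_insert habc (Finset.insert_ne_empty _ _),
    hVec_insert hbcΔ (Finset.insert_ne_empty _ _), hcard, Finset.card_pair hbc]
  norm_num
end
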